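/- Reduction is non-increasing in predicates for simple contracts: if ⊢ e : T, all predicate contracts in e are closed with identity closing substitutions, and e ⟶ e' (in either classic or space-efficient CPCF), then preds(e') ⊆ preds(e), where preds(e) is the set of predicate bodies occurring in e (in monitors, labeled contracts, and predicate stacks). -/
import Mathlib


/-! Contract PCF with both classic monitors `mon^l(C,e)` and
    space-efficient labeled-contract monitors `mon(c,e)`.
    Predicate contracts carry explicit delayed closing substitutions. -/

inductive Ty where
  | bool | int
  | arrow : Ty → Ty → Ty
deriving DecidableEq

inductive Const where
  | int : Int → Const
  | bool : Bool → Const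
deriving DecidableEq

def Const.ty : Const → Ty
  | .int _ => .int
  | .bool _ => .bool

def Ty.IsBase : Ty → Prop
  | .bool => True
  | .int => True
  | .arrow _ _ => False

abbrev Label := String
abbrev Vr := String

mutual
/-- Terms. -/
inductive Tm where
  | var : Vr → Tm
  | const : Const → Tm
  | lam : Vr → Ty → Tm → Tm
  | app : Tm → Tm → Tm
  | fix : Vr → Ty → Tm → Tm
  | ite : Tm → Tm → Tm → Tm
  | err : Label → Tm
  | mon : Label → Ctr → Tm → Tm
  | monL : LCtr → Tm → Tm
/-- Contracts: predicate contracts with a delayed closing substitution,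
    and dependent function contracts. -/
inductive Ctr where
  | pred : Env → Tm → Ctr
  | fn : Vr → Ctr → Ctr → Ctr
/-- Delayed closing substitutions (environments). -/
inductive Env where
  | id : Env
  | cons : Vr → Tm → Env → Env
/-- Labeled contracts: predicate stacks (`nil` / `pcons`) of labeled
    predicates, and function contracts. -/
inductive LCtr where
  | nil : LCtr
  | pcons : Label → Env → Tm → LCtr → LCtr
  | fn : Vr → LCtr → LCtr → LCtr
end

mutual
/-- Free variables of a term. -/
def Tm.fv : Tm → List Vr
  | .var x => [x]
  | .const _ => []
  | .lam x _ e => e.fv.filter (· ≠ x)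
  | .app e₁ e₂ => e₁.fv ++ e₂.fv
  | .fix x _ e => e.fv.filter (· ≠ x)
  | .ite e₁ e₂ e₃ => e₁.fv ++ e₂.fv ++ e₃.fv
  | .err _ => []
  | .mon _ C e => C.fv ++ e.fv
  | .monL c e => c.fv ++ e.fv
/-- Free variables of a contract. -/
def Ctr.fv : Ctr → List Vr
  | .pred σ e => fvClose σ e.fv
  | .fn x C₁ C₂ => C₁.fv ++ C₂.fv.filter (· ≠ x)
/-- `fvClose σ xs`: free variables of a term with free variables `xs`
    after closing up with `σ`. -/
def fvClose : Env → List Vr → List Vr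
  | .id, xs => xs
  | .cons y v σ, xs =>
      fvClose σ (xs.filter (· ≠ y)) ++ (if y ∈ xs then v.fv else [])
/-- Free variables of a labeled contract. -/
def LCtr.fv : LCtr → List Vr
  | .nil => []
  | .pcons _ σ e r => fvClose σ e.fv ++ r.fv
  | .fn x c₁ c₂ => c₁.fv ++ c₂.fv.filter (· ≠ x)
end

mutual
/-- Substitution of a closed value for a variable. -/
def Tm.subst (x : Vr) (v : Tm) : Tm → Tm
  | .var y => if y = x then v else .var y
  | .const k => .const k
  | .lam y T e => if y = x then .lam y T e else .lam y T (Tm.subst x v e)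
  | .app e₁ e₂ => .app (Tm.subst x v e₁) (Tm.subst x v e₂)
  | .fix y T e => if y = x then .fix y T e else .fix y T (Tm.subst x v e)
  | .ite e₁ e₂ e₃ => .ite (Tm.subst x v e₁) (Tm.subst x v e₂) (Tm.subst x v e₃)
  | .err l => .err l
  | .mon l C e => .mon l (Ctr.subst x v C) (Tm.subst x v e)
  | .monL c e => .monL (LCtr.subst x v c) (Tm.subst x v e)
/-- Substitution into contracts: delayed into the closing substitution of a
    predicate contract, and only recorded when the variable occurs free. -/
def Ctr.subst (x : Vr) (v : Tm) : Ctr → Ctr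
  | .pred σ e => if x ∈ fvClose σ e.fv then .pred (.cons x v σ) e else .pred σ e
  | .fn y C₁ C₂ =>
      if y = x then .fn y (Ctr.subst x v C₁) C₂
      else .fn y (Ctr.subst x v C₁) (Ctr.subst x v C₂)
/-- Substitution into labeled contracts. -/
def LCtr.subst (x : Vr) (v : Tm) : LCtr → LCtr
  | .nil => .nil
  | .pcons l σ e r =>
      if x ∈ fvClose σ e.fv then .pcons l (.cons x v σ) e (LCtr.subst x v r)
      else .pcons l σ e (LCtr.subst x v r)
  | .fn y c₁ c₂ =>
      if y = x then .fn y (LCtr.subst x v c₁) c₂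
      else .fn y (LCtr.subst x v c₁) (LCtr.subst x v c₂)
end

/-- Apply a delayed closing substitution to a term. -/
def Env.apply : Env → Tm → Tm
  | .id, e => e
  | .cons x v σ, e => σ.apply (Tm.subst x v e)

/-- Lookup in a closing substitution. -/
def Env.lookup : Env → Vr → Option Tm
  | .id, _ => none
  | .cons y v σ, x => if x = y then some v else σ.lookup x

/-- Labeling an ordinary contract, producing a labeled contract. -/
def Ctr.label (l : Label) : Ctr → LCtr
  | .pred σ e => .pcons l σ e .nil
  | .fn x C₁ C₂ => .fn x (C₁.label l) (C₂.label l)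

/-- Classic values: constants, lambdas, and (classic) function proxies. -/
inductive Value : Tm → Prop where
  | const {k} : Value (.const k)
  | lam {x T e} : Value (.lam x T e)
  | proxy {l x C₁ C₂ v} : Value v → Value (.mon l (.fn x C₁ C₂) v)

/-- Space-efficient values: constants, lambdas, and labeled function
    proxies (at most one proxy per function). -/
inductive ValueE : Tm → Prop where
  | const {k} : ValueE (.const k)
  | lam {x T e} : ValueE (.lam x T e)
  | proxy {x c₁ c₂ y T e} : ValueE (.monL (.fn x c₁ c₂) (.lam y T e))

section Join
variable (imp : Env → Tm → Env → Tm → Prop)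

mutual
/-- `Drop r σ e r'`: removing from the stack `r` every labeled predicate
    implied by `pred_σ(e)` yields `r'`. -/
inductive Drop : LCtr → Env → Tm → LCtr → Prop where
  | nil {σ e} : Drop .nil σ e .nil
  | impl {l σ₁ e₁ σ₂ e₂ r r'} : imp σ₁ e₁ σ₂ e₂ →
      Drop r σ₂ e₂ r' → Drop (.pcons l σ₂ e₂ r) σ₁ e₁ r'
  | nimpl {l σ₁ e₁ σ₂ e₂ r r'} : ¬ imp σ₁ e₁ σ₂ e₂ →
      Drop r σ₁ e₁ r' → Drop (.pcons l σ₂ e₂ r) σ₁ e₁ (.pcons l σ₂ e₂ r')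
/-- `Join c₁ c₂ c₃`: joining the labeled contracts `c₁` and `c₂`
    (eliminating redundant checks) yields `c₃`. -/
inductive Join : LCtr → LCtr → LCtr → Prop where
  | nil {r₂} : Join .nil r₂ r₂
  | pcons {l σ e r₁ r₂ r₃ r₄} : Join r₁ r₂ r₃ → Drop r₃ σ e r₄ →
      Join (.pcons l σ e r₁) r₂ (.pcons l σ e r₄)
  | fn {x c₁₁ c₁₂ c₂₁ c₂₂ d₁ w d₂} : Join c₂₁ c₁₁ d₁ →
      Wrap c₁₂ x c₂₂ w → Join w c₂₂ d₂ →
      Join (.fn x c₁₁ c₁₂) (.fn x c₂₁ c₂₂) (.fn x d₁ d₂)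
/-- `Wrap c₀ x c c₀'`: forcing the pending substitution of a monitor of
    `c` for `x` into the labeled contract `c₀` yields `c₀'`. -/
inductive Wrap : LCtr → Vr → LCtr → LCtr → Prop where
  | nil {x c} : Wrap .nil x c .nil
  | skip {l σ e r x c r'} : x ∉ fvClose σ e.fv →
      Wrap r x c r' → Wrap (.pcons l σ e r) x c (.pcons l σ e r')
  | joinMon {l σ e r x c c' e' c'' r'} : x ∈ fvClose σ e.fv →
      σ.lookup x = some (.monL c' e') → Join c' c c'' →
      Wrap r x c r' →
      Wrap (.pcons l σ e r) x c (.pcons l (.cons x (.monL c'' e') σ) e r')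
  | monOther {l σ e r x c v r'} : x ∈ fvClose σ e.fv →
      (σ.lookup x).getD (.var x) = v → (∀ c' e', v ≠ .monL c' e') →
      Wrap r x c r' →
      Wrap (.pcons l σ e r) x c (.pcons l (.cons x (.monL c v) σ) e r')
  | fn {c₁ c₂ x c c₁' c₂' y} : Wrap c₁ x c c₁' → Wrap c₂ x c c₂' →
      Wrap (.fn y c₁ c₂) x c (.fn y c₁' c₂')
end

/-- Small-step reduction for space-efficient CPCF, parameterized by the
    predicate implication relation `imp`. -/
inductive StepE : Tm → Tm → Prop where
  | beta {x T e v} : ValueE v → StepE (.app (.lam x T e) v) (Tm.subst x v e)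
  | fix {x T e} : StepE (.fix x T e) (Tm.subst x (.fix x T e) e)
  | iteTrue {e₂ e₃} : StepE (.ite (.const (.bool true)) e₂ e₃) e₂
  | iteFalse {e₂ e₃} : StepE (.ite (.const (.bool false)) e₂ e₃) e₃
  | appL {e₁ e₁' e₂} : StepE e₁ e₁' → StepE (.app e₁ e₂) (.app e₁' e₂)
  | appR {v e₂ e₂'} : ValueE v → StepE e₂ e₂' → StepE (.app v e₂) (.app v e₂')
  | ite {e₁ e₁' e₂ e₃} : StepE e₁ e₁' → StepE (.ite e₁ e₂ e₃) (.ite e₁' e₂ e₃)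
  | appLRaise {l e₂} : StepE (.app (.err l) e₂) (.err l)
  | appRRaise {v l} : ValueE v → StepE (.app v (.err l)) (.err l)
  | iteRaise {l e₂ e₃} : StepE (.ite (.err l) e₂ e₃) (.err l)
  | monLabel {l C e} : StepE (.mon l C e) (.monL (C.label l) e)
  | monCNil {v} : ValueE v → StepE (.monL .nil v) v
  | monCPred {l σ e r v} : ValueE v →
      StepE (.monL (.pcons l σ e r) v)
            (.ite (.app (σ.apply e) v) (.monL r v) (.err l))
  | monCApp {x c₁ c₂ v₁ v₂} : ValueE v₁ → ValueE v₂ →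
      StepE (.app (.monL (.fn x c₁ c₂) v₁) v₂)
            (.monL (LCtr.subst x v₂ c₂) (.app v₁ (.monL c₁ v₂)))
  | monC {c e e'} : (∀ c' e'', e ≠ .monL c' e'') → StepE e e' →
      StepE (.monL c e) (.monL c e')
  | monCJoin {c₁ c₂ c₃ e} : Join imp c₁ c₂ c₃ →
      StepE (.monL c₂ (.monL c₁ e)) (.monL c₃ e)
  | monCRaise {c l} : StepE (.monL c (.err l)) (.err l)

end Join

/-- Typing contexts. -/
abbrev Ctx := List (Vr × Ty)

mutual
/-- Typing of terms. -/
inductive HasTy : Ctx → Tm → Ty → Prop where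
  | var {Γ x T} : List.lookup x Γ = some T → HasTy Γ (.var x) T
  | const {Γ k} : HasTy Γ (.const k) k.ty
  | lam {Γ x T₁ e T₂} : HasTy ((x, T₁) :: Γ) e T₂ →
      HasTy Γ (.lam x T₁ e) (.arrow T₁ T₂)
  | app {Γ e₁ e₂ T₁ T₂} : HasTy Γ e₁ (.arrow T₁ T₂) → HasTy Γ e₂ T₁ →
      HasTy Γ (.app e₁ e₂) T₂
  | fix {Γ x T e} : HasTy ((x, T) :: Γ) e T → HasTy Γ (.fix x T e) T
  | ite {Γ e₁ e₂ e₃ T} : HasTy Γ e₁ .bool → HasTy Γ e₂ T → HasTy Γ e₃ T →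
      HasTy Γ (.ite e₁ e₂ e₃) T
  | err {Γ l T} : HasTy Γ (.err l) T
  | mon {Γ l C e T} : CtrTy Γ C T → HasTy Γ e T → HasTy Γ (.mon l C e) T
  | monL {Γ c e T} : LCtrTy Γ c T → HasTy Γ e T → HasTy Γ (.monL c e) T
/-- Typing of contracts. -/
inductive CtrTy : Ctx → Ctr → Ty → Prop where
  | pred {Γ Γ' σ e B} : B.IsBase → EnvTy Γ' σ →
      HasTy (Γ' ++ Γ) e (.arrow B .bool) → CtrTy Γ (.pred σ e) B
  | fn {Γ x C₁ C₂ T₁ T₂} : CtrTy Γ C₁ T₁ → CtrTy ((x, T₁) :: Γ) C₂ T₂ →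
      CtrTy Γ (.fn x C₁ C₂) (.arrow T₁ T₂)
/-- Typing of labeled contracts. -/
inductive LCtrTy : Ctx → LCtr → Ty → Prop where
  | nil {Γ B} : Ty.IsBase B → LCtrTy Γ .nil B
  | pcons {Γ Γ' l σ e r B} : B.IsBase → EnvTy Γ' σ →
      HasTy (Γ' ++ Γ) e (.arrow B .bool) → LCtrTy Γ r B →
      LCtrTy Γ (.pcons l σ e r) B
  | fn {Γ x c₁ c₂ T₁ T₂} : LCtrTy Γ c₁ T₁ → LCtrTy ((x, T₁) :: Γ) c₂ T₂ →
      LCtrTy Γ (.fn x c₁ c₂) (.arrow T₁ T₂)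
/-- Well-formed closing substitutions: each variable of the context is
    mapped to a closed value of the declared type. -/
inductive EnvTy : Ctx → Env → Prop where
  | id : EnvTy [] .id
  | cons {Γ x v T σ} : ValueE v → HasTy [] v T → EnvTy Γ σ →
      EnvTy ((x, T) :: Γ) (.cons x v σ)
end

/-- Small-step reduction for classic CPCF (over the shared syntax). -/
inductive StepC : Tm → Tm → Prop where
  | beta {x T e v} : Value v → StepC (.app (.lam x T e) v) (Tm.subst x v e)
  | fix {x T e} : StepC (.fix x T e) (Tm.subst x (.fix x T e) e)
  | iteTrue {e₂ e₃} : StepC (.ite (.const (.bool true)) e₂ e₃) e₂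
  | iteFalse {e₂ e₃} : StepC (.ite (.const (.bool false)) e₂ e₃) e₃
  | appL {e₁ e₁' e₂} : StepC e₁ e₁' → StepC (.app e₁ e₂) (.app e₁' e₂)
  | appR {v e₂ e₂'} : Value v → StepC e₂ e₂' → StepC (.app v e₂) (.app v e₂')
  | ite {e₁ e₁' e₂ e₃} : StepC e₁ e₁' → StepC (.ite e₁ e₂ e₃) (.ite e₁' e₂ e₃)
  | appLRaise {l e₂} : StepC (.app (.err l) e₂) (.err l)
  | appRRaise {v l} : Value v → StepC (.app v (.err l)) (.err l)
  | iteRaise {l e₂ e₃} : StepC (.ite (.err l) e₂ e₃) (.err l)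
  | monPred {l σ e v} : Value v →
      StepC (.mon l (.pred σ e) v) (.ite (.app (σ.apply e) v) v (.err l))
  | monApp {l x C₁ C₂ v₁ v₂} : Value v₁ → Value v₂ →
      StepC (.app (.mon l (.fn x C₁ C₂) v₁) v₂)
            (.mon l (Ctr.subst x v₂ C₂) (.app v₁ (.mon l C₁ v₂)))
  | mon {l C e e'} : StepC e e' → StepC (.mon l C e) (.mon l C e')
  | monRaise {l C l'} : StepC (.mon l C (.err l')) (.err l)

mutual
/-- The set of predicates (paired with their closing substitutions)
    occurring in a term. -/
def Tm.preds : Tm → Set (Env × Tm)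
  | .var _ => ∅
  | .const _ => ∅
  | .lam _ _ e => e.preds
  | .app e₁ e₂ => e₁.preds ∪ e₂.preds
  | .fix _ _ e => e.preds
  | .ite e₁ e₂ e₃ => e₁.preds ∪ e₂.preds ∪ e₃.preds
  | .err _ => ∅
  | .mon _ C e => C.preds ∪ e.preds
  | .monL c e => c.preds ∪ e.preds
def Ctr.preds : Ctr → Set (Env × Tm)
  | .pred σ e => {(σ, e)} ∪ e.preds ∪ σ.preds
  | .fn _ C₁ C₂ => C₁.preds ∪ C₂.preds
def Env.preds : Env → Set (Env × Tm)
  | .id => ∅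
  | .cons _ v σ => v.preds ∪ σ.preds
def LCtr.preds : LCtr → Set (Env × Tm)
  | .nil => ∅
  | .pcons _ σ e r => {(σ, e)} ∪ e.preds ∪ σ.preds ∪ r.preds
  | .fn _ c₁ c₂ => c₁.preds ∪ c₂.preds
end

/-- A program uses simple contracts when every predicate occurring in it
    is closed and has the identity closing substitution. -/
def Simple (e : Tm) : Prop :=
  ∀ p ∈ e.preds, p.1 = Env.id ∧ Tm.fv p.2 = []

/-! ### Auxiliary lemmas -/

/-- All predicates in a set are simple. -/
def Simp (S : Set (Env × Tm)) : Prop :=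
  ∀ p ∈ S, p.1 = Env.id ∧ Tm.fv p.2 = []

theorem Simp.mono {S T : Set (Env × Tm)} (h : Simp S) (hsub : T ⊆ S) : Simp T :=
  fun p hp => h p (hsub hp)

theorem Simp.fvClose_eq {S : Set (Env × Tm)} {σ : Env} {e : Tm}
    (h : Simp S) (hm : (σ, e) ∈ S) : fvClose σ e.fv = [] := by
  obtain ⟨h1, h2⟩ := h _ hm
  simp only at h1 h2
  rw [h1, h2]
  rfl

mutual
theorem Tm.subst_preds (x : Vr) (v : Tm) :
    ∀ e : Tm, Simp e.preds → (Tm.subst x v e).preds ⊆ v.preds ∪ e.preds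
  | .var y, _ => by
      simp only [Tm.subst]
      split
      · exact Set.subset_union_left
      · simp [Tm.preds]
  | .const k, _ => by simp [Tm.subst, Tm.preds]
  | .lam y T e, h => by
      simp only [Tm.subst]
      split
      · exact Set.subset_union_right
      · simpa [Tm.preds] using Tm.subst_preds x v e (by simpa [Tm.preds] using h)
  | .app e₁ e₂, h => by
      simp only [Tm.subst, Tm.preds] at h ⊢
      refine Set.union_subset ?_ ?_
      · exact (Tm.subst_preds x v e₁ (h.mono Set.subset_union_left)).trans
          (Set.union_subset_union_right _ Set.subset_union_left)
      · exact (Tm.subst_preds x v e₂ (h.mono Set.subset_union_right)).trans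
          (Set.union_subset_union_right _ Set.subset_union_right)
  | .fix y T e, h => by
      simp only [Tm.subst]
      split
      · exact Set.subset_union_right
      · simpa [Tm.preds] using Tm.subst_preds x v e (by simpa [Tm.preds] using h)
  | .ite e₁ e₂ e₃, h => by
      simp only [Tm.subst, Tm.preds] at h ⊢
      refine Set.union_subset (Set.union_subset ?_ ?_) ?_
      · exact (Tm.subst_preds x v e₁ (h.mono (Set.subset_union_left.trans
          Set.subset_union_left))).trans (Set.union_subset_union_right _
          (Set.subset_union_left.trans Set.subset_union_left))
      · exact (Tm.subst_preds x v e₂ (h.mono (Set.subset_union_right.trans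
          Set.subset_union_left))).trans (Set.union_subset_union_right _
          (Set.subset_union_right.trans Set.subset_union_left))
      · exact (Tm.subst_preds x v e₃ (h.mono Set.subset_union_right)).trans
          (Set.union_subset_union_right _ Set.subset_union_right)
  | .err l, _ => by simp [Tm.subst, Tm.preds]
  | .mon l C e, h => by
      simp only [Tm.subst, Tm.preds] at h ⊢
      refine Set.union_subset ?_ ?_
      · exact (Ctr.subst_preds x v C (h.mono Set.subset_union_left)).trans
          (Set.union_subset_union_right _ Set.subset_union_left)
      · exact (Tm.subst_preds x v e (h.mono Set.subset_union_right)).trans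
          (Set.union_subset_union_right _ Set.subset_union_right)
  | .monL c e, h => by
      simp only [Tm.subst, Tm.preds] at h ⊢
      refine Set.union_subset ?_ ?_
      · exact (LCtr.subst_preds x v c (h.mono Set.subset_union_left)).trans
          (Set.union_subset_union_right _ Set.subset_union_left)
      · exact (Tm.subst_preds x v e (h.mono Set.subset_union_right)).trans
          (Set.union_subset_union_right _ Set.subset_union_right)

theorem Ctr.subst_preds (x : Vr) (v : Tm) :
    ∀ C : Ctr, Simp C.preds → (Ctr.subst x v C).preds ⊆ v.preds ∪ C.preds
  | .pred σ e, h => by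
      have hfv : fvClose σ e.fv = [] :=
        h.fvClose_eq (by simp [Ctr.preds])
      simp only [Ctr.subst, hfv]
      simp
  | .fn y C₁ C₂, h => by
      simp only [Ctr.subst, Ctr.preds] at h ⊢
      split <;> simp only [Ctr.preds] <;> refine Set.union_subset ?_ ?_
      · exact (Ctr.subst_preds x v C₁ (h.mono Set.subset_union_left)).trans
          (Set.union_subset_union_right _ Set.subset_union_left)
      · exact Set.subset_union_right.trans Set.subset_union_right
      · exact (Ctr.subst_preds x v C₁ (h.mono Set.subset_union_left)).trans
          (Set.union_subset_union_right _ Set.subset_union_left)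
      · exact (Ctr.subst_preds x v C₂ (h.mono Set.subset_union_right)).trans
          (Set.union_subset_union_right _ Set.subset_union_right)

theorem LCtr.subst_preds (x : Vr) (v : Tm) :
    ∀ c : LCtr, Simp c.preds → (LCtr.subst x v c).preds ⊆ v.preds ∪ c.preds
  | .nil, _ => by simp [LCtr.subst, LCtr.preds]
  | .pcons l σ e r, h => by
      have hfv : fvClose σ e.fv = [] :=
        h.fvClose_eq (by simp [LCtr.preds])
      have hr := LCtr.subst_preds x v r (h.mono (by
        simp only [LCtr.preds]; exact Set.subset_union_right))
      simp only [LCtr.subst, hfv]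
      rw [if_neg (by simp)]
      intro p hp
      simp only [LCtr.preds, Set.mem_union] at hp ⊢
      rcases hp with (((h1 | h1) | h1) | h1)
      · exact Or.inr (Or.inl (Or.inl (Or.inl h1)))
      · exact Or.inr (Or.inl (Or.inl (Or.inr h1)))
      · exact Or.inr (Or.inl (Or.inr h1))
      · rcases hr h1 with h2 | h2
        · exact Or.inl h2
        · exact Or.inr (Or.inr h2)
  | .fn y c₁ c₂, h => by
      simp only [LCtr.subst, LCtr.preds] at h ⊢
      split <;> simp only [LCtr.preds] <;> refine Set.union_subset ?_ ?_
      · exact (LCtr.subst_preds x v c₁ (h.mono Set.subset_union_left)).trans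
          (Set.union_subset_union_right _ Set.subset_union_left)
      · exact Set.subset_union_right.trans Set.subset_union_right
      · exact (LCtr.subst_preds x v c₁ (h.mono Set.subset_union_left)).trans
          (Set.union_subset_union_right _ Set.subset_union_left)
      · exact (LCtr.subst_preds x v c₂ (h.mono Set.subset_union_right)).trans
          (Set.union_subset_union_right _ Set.subset_union_right)
end

theorem Ctr.label_preds (l : Label) :
    ∀ C : Ctr, (Ctr.label l C).preds = C.preds
  | .pred σ e => by simp [Ctr.label, LCtr.preds, Ctr.preds]
  | .fn x C₁ C₂ => by
      simp [Ctr.label, LCtr.preds, Ctr.preds,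
        Ctr.label_preds l C₁, Ctr.label_preds l C₂]

theorem drop_preds {imp : Env → Tm → Env → Tm → Prop} {r : LCtr} {σ : Env}
    {e : Tm} {r' : LCtr} (h : Drop imp r σ e r') : r'.preds ⊆ r.preds := by
  refine Drop.rec (imp := imp)
    (motive_1 := fun r σ e r' _ => r'.preds ⊆ r.preds)
    (motive_2 := fun _ _ _ _ => True)
    (motive_3 := fun _ _ _ _ _ => True)
    ?_ ?_ ?_ ?_ ?_ ?_ ?_ ?_ ?_ ?_ ?_ h
  · intro σ e; exact subset_rfl
  · intro l σ₁ e₁ σ₂ e₂ r r' _ _ ih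
    exact ih.trans (by simp only [LCtr.preds]; exact Set.subset_union_right)
  · intro l σ₁ e₁ σ₂ e₂ r r' _ _ ih
    intro p hp
    simp only [LCtr.preds, Set.mem_union] at hp ⊢
    rcases hp with h1 | h1
    · exact Or.inl h1
    · exact Or.inr (ih h1)
  all_goals intros; trivial

theorem wrap_preds {imp : Env → Tm → Env → Tm → Prop} {c₀ : LCtr} {x : Vr}
    {c c₀' : LCtr} (h : Wrap imp c₀ x c c₀') (hs : Simp c₀.preds) :
    c₀'.preds ⊆ c₀.preds := by
  refine Wrap.rec (imp := imp)
    (motive_1 := fun _ _ _ _ _ => True)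
    (motive_2 := fun _ _ _ _ => True)
    (motive_3 := fun c₀ x c c₀' _ => Simp c₀.preds → c₀'.preds ⊆ c₀.preds)
    ?_ ?_ ?_ ?_ ?_ ?_ ?_ ?_ ?_ ?_ ?_ h hs
  · intros; trivial
  · intros; trivial
  · intros; trivial
  · intros; trivial
  · intros; trivial
  · intros; trivial
  · intro x c _; exact subset_rfl
  · intro l σ e r x c r' _ _ ih hsp
    have hr : r'.preds ⊆ r.preds := ih (hsp.mono
      (by simp only [LCtr.preds]; exact Set.subset_union_right))
    intro p hp
    simp only [LCtr.preds, Set.mem_union] at hp ⊢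
    rcases hp with h1 | h1
    · exact Or.inl h1
    · exact Or.inr (hr h1)
  · intro l σ e r x c c' e' c'' r' hmem _ _ _ _ _ hsp
    exact absurd hmem (by rw [hsp.fvClose_eq (by simp [LCtr.preds])]; simp)
  · intro l σ e r x c v r' hmem _ _ _ _ hsp
    exact absurd hmem (by rw [hsp.fvClose_eq (by simp [LCtr.preds])]; simp)
  · intro c₁ c₂ x c c₁' c₂' y _ _ ih₁ ih₂ hsp
    simp only [LCtr.preds]
    exact Set.union_subset_union
      (ih₁ (hsp.mono Set.subset_union_left))
      (ih₂ (hsp.mono Set.subset_union_right))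

theorem join_preds {imp : Env → Tm → Env → Tm → Prop} {c₁ c₂ c₃ : LCtr}
    (h : Join imp c₁ c₂ c₃) (h₁ : Simp c₁.preds) (h₂ : Simp c₂.preds) :
    c₃.preds ⊆ c₁.preds ∪ c₂.preds := by
  refine Join.rec (imp := imp)
    (motive_1 := fun _ _ _ _ _ => True)
    (motive_2 := fun c₁ c₂ c₃ _ =>
      Simp c₁.preds → Simp c₂.preds → c₃.preds ⊆ c₁.preds ∪ c₂.preds)
    (motive_3 := fun _ _ _ _ _ => True)
    ?_ ?_ ?_ ?_ ?_ ?_ ?_ ?_ ?_ ?_ ?_ h h₁ h₂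
  · intros; trivial
  · intros; trivial
  · intros; trivial
  · intro r₂ _ _; exact Set.subset_union_right
  · intro l σ e r₁ r₂ r₃ r₄ _ hd ih _ hs₁ hs₂
    have hr₃ := ih (hs₁.mono
      (by simp only [LCtr.preds]; exact Set.subset_union_right)) hs₂
    have hr₄ : r₄.preds ⊆ r₃.preds := drop_preds hd
    intro p hp
    simp only [LCtr.preds, Set.mem_union] at hp ⊢
    rcases hp with h1 | h1
    · exact Or.inl (Or.inl h1)
    · rcases hr₃ (hr₄ h1) with h2 | h2
      · exact Or.inl (Or.inr h2)
      · exact Or.inr h2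
  · intro x c₁₁ c₁₂ c₂₁ c₂₂ d₁ w d₂ _ hw _ ih₁ _ ih₂ hs₁ hs₂
    simp only [LCtr.preds] at hs₁ hs₂ ⊢
    have hsc₁₁ := hs₁.mono (Set.subset_union_left)
    have hsc₁₂ := hs₁.mono (Set.subset_union_right)
    have hsc₂₁ := hs₂.mono (Set.subset_union_left)
    have hsc₂₂ := hs₂.mono (Set.subset_union_right)
    have hwsub : w.preds ⊆ c₁₂.preds := wrap_preds hw hsc₁₂
    have hd₁ := ih₁ hsc₂₁ hsc₁₁
    have hd₂ := ih₂ (hsc₁₂.mono hwsub) hsc₂₂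
    intro p hp
    simp only [Set.mem_union] at hp ⊢
    rcases hp with h1 | h1
    · rcases hd₁ h1 with h2 | h2
      · exact Or.inr (Or.inl h2)
      · exact Or.inl (Or.inl h2)
    · rcases hd₂ h1 with h2 | h2
      · exact Or.inl (Or.inr (hwsub h2))
      · exact Or.inr (Or.inr h2)
  all_goals intros; trivial

theorem stepC_preds : ∀ {e e' : Tm}, StepC e e' → Simp e.preds →
    e'.preds ⊆ e.preds := by
  intro e e' h
  induction h with
  | @beta x T e v _ =>
    intro hs
    simp only [Tm.preds] at hs ⊢
    rw [Set.union_comm]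
    exact Tm.subst_preds _ _ _ (hs.mono Set.subset_union_left)
  | @fix x T e =>
    intro hs
    simp only [Tm.preds] at hs ⊢
    simpa only [Tm.preds, Set.union_self] using Tm.subst_preds x (.fix x T e) e hs
  | iteTrue =>
    intro _ p hp
    simp only [Tm.preds, Set.mem_union] at hp ⊢
    tauto
  | iteFalse =>
    intro _ p hp
    simp only [Tm.preds, Set.mem_union] at hp ⊢
    tauto
  | appL _ ih =>
    intro hs
    simp only [Tm.preds] at hs ⊢
    exact Set.union_subset_union_left _ (ih (hs.mono Set.subset_union_left))
  | appR _ _ ih =>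
    intro hs
    simp only [Tm.preds] at hs ⊢
    exact Set.union_subset_union_right _ (ih (hs.mono Set.subset_union_right))
  | ite _ ih =>
    intro hs
    simp only [Tm.preds] at hs ⊢
    exact Set.union_subset_union_left _ (Set.union_subset_union_left _
      (ih (hs.mono (Set.subset_union_left.trans Set.subset_union_left))))
  | appLRaise => intro _; simp [Tm.preds]
  | appRRaise => intro _; simp [Tm.preds]
  | iteRaise => intro _; simp [Tm.preds]
  | @monPred l σ e v _ =>
    intro hs
    obtain ⟨hσ, -⟩ := hs (σ, e) (by simp [Tm.preds, Ctr.preds])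
    simp only at hσ
    subst hσ
    intro p hp
    simp only [Tm.preds, Ctr.preds, Env.apply, Set.mem_union,
      Set.mem_empty_iff_false] at hp ⊢
    tauto
  | @monApp l x C₁ C₂ v₁ v₂ _ _ =>
    intro hs
    have hsub := Ctr.subst_preds x v₂ C₂ (hs.mono (by
      simp only [Tm.preds, Ctr.preds]
      intro p hp
      simp only [Set.mem_union]
      tauto))
    intro p hp
    simp only [Tm.preds, Ctr.preds, Set.mem_union] at hp ⊢
    rcases hp with h1 | h1
    · rcases hsub h1 with h2 | h2 <;> tauto
    · tauto
  | mon _ ih =>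
    intro hs
    simp only [Tm.preds] at hs ⊢
    exact Set.union_subset_union_right _ (ih (hs.mono Set.subset_union_right))
  | monRaise => intro _; simp [Tm.preds]

theorem stepE_preds {imp : Env → Tm → Env → Tm → Prop} :
    ∀ {e e' : Tm}, StepE imp e e' → Simp e.preds → e'.preds ⊆ e.preds := by
  intro e e' h
  induction h with
  | @beta x T e v _ =>
    intro hs
    simp only [Tm.preds] at hs ⊢
    rw [Set.union_comm]
    exact Tm.subst_preds _ _ _ (hs.mono Set.subset_union_left)
  | @fix x T e =>
    intro hs
    simp only [Tm.preds] at hs ⊢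
    simpa only [Tm.preds, Set.union_self] using Tm.subst_preds x (.fix x T e) e hs
  | iteTrue =>
    intro _ p hp
    simp only [Tm.preds, Set.mem_union] at hp ⊢
    tauto
  | iteFalse =>
    intro _ p hp
    simp only [Tm.preds, Set.mem_union] at hp ⊢
    tauto
  | appL _ ih =>
    intro hs
    simp only [Tm.preds] at hs ⊢
    exact Set.union_subset_union_left _ (ih (hs.mono Set.subset_union_left))
  | appR _ _ ih =>
    intro hs
    simp only [Tm.preds] at hs ⊢
    exact Set.union_subset_union_right _ (ih (hs.mono Set.subset_union_right))
  | ite _ ih =>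
    intro hs
    simp only [Tm.preds] at hs ⊢
    exact Set.union_subset_union_left _ (Set.union_subset_union_left _
      (ih (hs.mono (Set.subset_union_left.trans Set.subset_union_left))))
  | appLRaise => intro _; simp [Tm.preds]
  | appRRaise => intro _; simp [Tm.preds]
  | iteRaise => intro _; simp [Tm.preds]
  | monLabel =>
    intro _
    simp only [Tm.preds, Ctr.label_preds]
    exact subset_rfl
  | monCNil => intro _; simp [Tm.preds, LCtr.preds]
  | @monCPred l σ e r v _ =>
    intro hs
    obtain ⟨hσ, -⟩ := hs (σ, e) (by simp [Tm.preds, LCtr.preds])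
    simp only at hσ
    subst hσ
    intro p hp
    simp only [Tm.preds, LCtr.preds, Env.apply, Set.mem_union,
      Set.mem_empty_iff_false] at hp ⊢
    tauto
  | @monCApp x c₁ c₂ v₁ v₂ _ _ =>
    intro hs
    have hsub := LCtr.subst_preds x v₂ c₂ (hs.mono (by
      simp only [Tm.preds, LCtr.preds]
      intro p hp
      simp only [Set.mem_union]
      tauto))
    intro p hp
    simp only [Tm.preds, LCtr.preds, Set.mem_union] at hp ⊢
    rcases hp with h1 | h1
    · rcases hsub h1 with h2 | h2 <;> tauto
    · tauto
  | monC _ _ ih =>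
    intro hs
    simp only [Tm.preds] at hs ⊢
    exact Set.union_subset_union_right _ (ih (hs.mono Set.subset_union_right))
  | @monCJoin c₁ c₂ c₃ e hj =>
    intro hs
    simp only [Tm.preds] at hs ⊢
    have hsub := join_preds hj
      (hs.mono (Set.subset_union_left.trans Set.subset_union_right))
      (hs.mono Set.subset_union_left)
    intro p hp
    simp only [Set.mem_union] at hp ⊢
    rcases hp with h1 | h1
    · rcases hsub h1 with h2 | h2 <;> tauto
    · tauto
  | monCRaise => intro _; simp [Tm.preds]

/-- Reduction is non-increasing in predicates for simple contracts, in
    either the classic or the space-efficient semantics. -/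
theorem preds_nonincreasing
    (imp : Env → Tm → Env → Tm → Prop)
    {e e' : Tm} {T : Ty}
    (hty : HasTy [] e T) (hsimple : Simple e)
    (hstep : StepC e e' ∨ StepE imp e e') :
    e'.preds ⊆ e.preds := by
  rcases hstep with h | h
  · exact stepC_preds h hsimple
  · exact stepE_preds h hsimple
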